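/- Let θ : G → H be a fibration (star-surjective ordered functor) of ordered groupoids and let A = ker θ. Then the induced functor ψ : G ⫽ A → H, [g] ↦ gθ, is a covering: for every identity e of G and every h ∈ H with h𝐝 = eθ, there exists g ∈ G with gg⁻¹ = e and gθ = h, and any g' ∈ G with g'g'⁻¹ ≃_A e and g'θ = h satisfies g' ≃_A g. -/
import Mathlib


/-!  A one-sorted algebraic formalization of ordered groupoids (Ehresmann / Lawson style).
Arrows form the carrier; composition `g * h` is "defined" when `g⁻¹ * g = h * h⁻¹`,
and is junk otherwise.  `res f g` is the restriction `(f|g)` of axiom (OG3). -/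

universe u v w u'

class OGroupoid (G : Type u) extends PartialOrder G, Mul G, Inv G where
  gpd_assoc : ∀ g h k : G, g⁻¹ * g = h * h⁻¹ → h⁻¹ * h = k * k⁻¹ →
      (g * h) * k = g * (h * k)
  gpd_inv_inv : ∀ g : G, g⁻¹⁻¹ = g
  gpd_mul_inv_rev : ∀ g h : G, g⁻¹ * g = h * h⁻¹ → (g * h)⁻¹ = h⁻¹ * g⁻¹
  gpd_dom_mul : ∀ g h : G, g⁻¹ * g = h * h⁻¹ → (g * h) * (g * h)⁻¹ = g * g⁻¹
  gpd_ran_mul : ∀ g h : G, g⁻¹ * g = h * h⁻¹ → (g * h)⁻¹ * (g * h) = h⁻¹ * h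
  gpd_id_left : ∀ g : G, g * g⁻¹ * g = g
  gpd_id_right : ∀ g : G, g * (g⁻¹ * g) = g
  ord_inv : ∀ g h : G, g ≤ h → g⁻¹ ≤ h⁻¹
  ord_mul : ∀ g₁ g₂ h₁ h₂ : G, g₁ ≤ g₂ → h₁ ≤ h₂ →
      g₁⁻¹ * g₁ = h₁ * h₁⁻¹ → g₂⁻¹ * g₂ = h₂ * h₂⁻¹ → g₁ * h₁ ≤ g₂ * h₂
  res : G → G → G
  res_dom : ∀ f g : G, f * f⁻¹ = f → f ≤ g * g⁻¹ → res f g * (res f g)⁻¹ = f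
  res_le : ∀ f g : G, f * f⁻¹ = f → f ≤ g * g⁻¹ → res f g ≤ g
  res_unique : ∀ f g k : G, f * f⁻¹ = f → f ≤ g * g⁻¹ → k * k⁻¹ = f → k ≤ g →
      k = res f g

namespace OGroupoid

variable {G : Type u} [OGroupoid G]

/-- The domain identity `g𝐝 = g * g⁻¹`. -/
def dm (g : G) : G := g * g⁻¹

/-- The range identity `g𝐫 = g⁻¹ * g`. -/
def rn (g : G) : G := g⁻¹ * g

/-- The composition `g * h` is defined. -/
def Cmp (g h : G) : Prop := g⁻¹ * g = h * h⁻¹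

/-- `e` is an identity of the groupoid. -/
def IsId (e : G) : Prop := e * e⁻¹ = e

/-- The corestriction `(g|f) = (f|g⁻¹)⁻¹` for an identity `f ≤ g𝐫`. -/
def cor (g f : G) : G := (res f g⁻¹)⁻¹

end OGroupoid

open OGroupoid

/-- An ordered functor between ordered groupoids. -/
structure OFunctor (G : Type u) (H : Type v) [OGroupoid G] [OGroupoid H] where
  toFun : G → H
  map_mul : ∀ g h : G, Cmp g h → toFun (g * h) = toFun g * toFun h
  map_inv : ∀ g : G, toFun g⁻¹ = (toFun g)⁻¹
  map_le : ∀ g h : G, g ≤ h → toFun g ≤ toFun h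

namespace OFunctor

variable {G : Type u} {H : Type v} [OGroupoid G] [OGroupoid H]

/-- Star-surjectivity: `φ` is a fibration of ordered groupoids. -/
def StarSurjective (φ : OFunctor G H) : Prop :=
  ∀ e : G, IsId e → ∀ h : H, dm h = φ.toFun e → ∃ g : G, dm g = e ∧ φ.toFun g = h

/-- Star-injectivity: `φ` is an immersion of ordered groupoids. -/
def StarInjective (φ : OFunctor G H) : Prop :=
  ∀ g k : G, dm g = dm k → φ.toFun g = φ.toFun k → g = k

/-- A covering is a star-bijective ordered functor. -/
def IsCovering (φ : OFunctor G H) : Prop := StarSurjective φ ∧ StarInjective φ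

/-- The kernel of an ordered functor. -/
def ker (φ : OFunctor G H) : Set G := {g : G | IsId (φ.toFun g)}

end OFunctor

namespace OGroupoid

variable {G : Type u} [OGroupoid G]

/-- `A` is a subgroupoid: closed under inversion and (defined) composition. -/
def IsSubgroupoid (A : Set G) : Prop :=
  (∀ a ∈ A, a⁻¹ ∈ A) ∧ ∀ a ∈ A, ∀ b ∈ A, Cmp a b → a * b ∈ A

/-- `A` is a normal ordered subgroupoid of `G`: a wide subgroupoid, closed under
restriction, and closed under conjugation `h⁻¹ a k` whenever `h` and `k` have a
common upper bound in `G`. -/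
def IsNormalOSub (A : Set G) : Prop :=
  IsSubgroupoid A ∧
  (∀ e : G, IsId e → e ∈ A) ∧
  (∀ a ∈ A, ∀ e : G, IsId e → e ≤ dm a → res e a ∈ A) ∧
  (∀ a ∈ A, ∀ h k : G, (∃ g : G, h ≤ g ∧ k ≤ g) → dm h = dm a → rn a = dm k →
      h⁻¹ * a * k ∈ A)

/-- The relation `g ≃_A h`: there are `a, b, c, d ∈ A` with `a g b` and `c h d`
defined, `a g b ≤ h` and `c h d ≤ g`. -/
def simA (A : Set G) (g h : G) : Prop :=
  (∃ a ∈ A, ∃ b ∈ A, Cmp a g ∧ Cmp g b ∧ a * g * b ≤ h) ∧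
  (∃ c ∈ A, ∃ d ∈ A, Cmp c h ∧ Cmp h d ∧ c * h * d ≤ g)

/-- The relation inducing the order on `≃_A`-classes: `[g] ≤ [k]` iff there are
`a, b ∈ A` with `a g b` defined and `a g b ≤ k`. -/
def leA (A : Set G) (g k : G) : Prop :=
  ∃ a ∈ A, ∃ b ∈ A, Cmp a g ∧ Cmp g b ∧ a * g * b ≤ k

/-- An `A`-nexus between identities `e` and `f`: a pair `(a,p)` of arrows of `A`
with `a𝐝 ≤ e`, `a𝐫 = f`, `p𝐝 ≤ f`, `p𝐫 = e`. -/
def IsNexus (A : Set G) (a p e f : G) : Prop :=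
  a ∈ A ∧ p ∈ A ∧ dm a ≤ e ∧ rn a = f ∧ dm p ≤ f ∧ rn p = e

end OGroupoid

section Aux

open OGroupoid

variable {G : Type u} {H : Type v} [OGroupoid G] [OGroupoid H]

lemma cmp_self_inv (g : G) : Cmp g g⁻¹ := by
  show g⁻¹ * g = g⁻¹ * g⁻¹⁻¹; rw [gpd_inv_inv]

lemma isId_dm (g : G) : IsId (dm g) := gpd_dom_mul g g⁻¹ (cmp_self_inv g)

lemma dm_inv (g : G) : dm g⁻¹ = rn g := by
  show g⁻¹ * g⁻¹⁻¹ = g⁻¹ * g; rw [gpd_inv_inv]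

lemma isId_rn (g : G) : IsId (rn g) := by
  have h := isId_dm (g⁻¹ : G)
  rwa [dm_inv] at h

lemma dm_mul {g h : G} (hc : Cmp g h) : dm (g * h) = dm g := gpd_dom_mul g h hc

lemma rn_mul {g h : G} (hc : Cmp g h) : rn (g * h) = rn h := gpd_ran_mul g h hc

lemma dm_mul_self (g : G) : dm g * g = g := gpd_id_left g

lemma mul_rn_self (g : G) : g * rn g = g := gpd_id_right g

lemma id_inv {e : G} (he : IsId e) : e⁻¹ = e := by
  have h1 : (e * e⁻¹)⁻¹ = e⁻¹⁻¹ * e⁻¹ := gpd_mul_inv_rev e e⁻¹ (cmp_self_inv e)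
  rw [he, gpd_inv_inv] at h1
  rw [h1]; exact he

lemma id_rn {e : G} (he : IsId e) : rn e = e := by
  show e⁻¹ * e = e
  rw [id_inv he]
  have h2 := gpd_id_left e
  rwa [he] at h2

lemma le_dm {g h : G} (hle : g ≤ h) : dm g ≤ dm h :=
  ord_mul g h g⁻¹ h⁻¹ hle (ord_inv _ _ hle) (cmp_self_inv g) (cmp_self_inv h)

lemma eq_of_le_of_dm_eq {x y : G} (hle : x ≤ y) (hdm : dm x = dm y) : x = y := by
  have h1 := res_unique (dm y) y x (isId_dm y) (le_refl _) hdm hle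
  have h2 := res_unique (dm y) y y (isId_dm y) (le_refl _) rfl (le_refl y)
  rw [h1, ← h2]

lemma map_dm (θ : OFunctor G H) (g : G) : θ.toFun (dm g) = dm (θ.toFun g) := by
  show θ.toFun (g * g⁻¹) = _
  rw [θ.map_mul g g⁻¹ (cmp_self_inv g), θ.map_inv]
  rfl

lemma map_rn (θ : OFunctor G H) (g : G) : θ.toFun (rn g) = rn (θ.toFun g) := by
  show θ.toFun (g⁻¹ * g) = _
  rw [θ.map_mul g⁻¹ g (by show g⁻¹⁻¹ * g⁻¹ = g * g⁻¹; rw [gpd_inv_inv]), θ.map_inv]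
  rfl

/-- Key step: if `c ∈ ker θ`, `cg` is defined, `c𝐝 ≤ t𝐝` and `tθ = gθ`, then there
is `q ∈ ker θ` with `gq` defined and `cgq ≤ t`. -/
lemma key (θ : OFunctor G H) {c g t : G} (hc : IsId (θ.toFun c))
    (hcg : Cmp c g) (hct : dm c ≤ dm t) (hθ : θ.toFun t = θ.toFun g) :
    ∃ q : G, q ∈ θ.ker ∧ Cmp g q ∧ c * g * q ≤ t := by
  set m := c * g with hm
  -- θ c = dm (θ g)
  have hrc : rn c = dm g := hcg
  have hθc : θ.toFun c = dm (θ.toFun g) := by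
    have h1 : rn (θ.toFun c) = dm (θ.toFun g) := by
      rw [← map_rn, ← map_dm, hrc]
    rw [← id_rn hc]; exact h1
  have hθm : θ.toFun m = θ.toFun g := by
    rw [hm, θ.map_mul c g hcg, hθc, dm_mul_self]
  have hdmm : dm m = dm c := dm_mul hcg
  -- the restriction of t to dm c
  set r := res (dm c) t with hr
  have hresd : dm r = dm c := res_dom (dm c) t (isId_dm c) hct
  have hrle : r ≤ t := res_le (dm c) t (isId_dm c) hct
  have hθr : θ.toFun r = θ.toFun t := by
    apply eq_of_le_of_dm_eq (θ.map_le _ _ hrle)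
    rw [← map_dm, ← map_dm, hresd, ← hdmm, map_dm, map_dm, hθm, hθ]
  have hcmp : Cmp m⁻¹ r := by
    show m⁻¹⁻¹ * m⁻¹ = r * r⁻¹
    rw [gpd_inv_inv]
    show dm m = dm r
    rw [hdmm, hresd]
  refine ⟨m⁻¹ * r, ?_, ?_, ?_⟩
  · -- kernel membership
    show IsId (θ.toFun (m⁻¹ * r))
    rw [θ.map_mul m⁻¹ r hcmp, θ.map_inv, hθr, hθ, ← hθm]
    exact isId_rn (θ.toFun m)
  · -- Cmp g (m⁻¹ * r)
    show g⁻¹ * g = (m⁻¹ * r) * (m⁻¹ * r)⁻¹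
    have h1 : dm (m⁻¹ * r) = rn m := by rw [dm_mul hcmp, dm_inv]
    have h2 : rn m = rn g := rn_mul hcg
    show rn g = dm (m⁻¹ * r)
    rw [h1, h2]
  · -- c * g * (m⁻¹ * r) ≤ t
    have hassoc : m * (m⁻¹ * r) = (m * m⁻¹) * r :=
      (gpd_assoc m m⁻¹ r (cmp_self_inv m) hcmp).symm
    have : c * g * (m⁻¹ * r) = r := by
      rw [← hm, hassoc]
      show dm m * r = r
      rw [hdmm, ← hresd, dm_mul_self]
    rw [this]; exact hrle

end Aux

/-- **Statement 16.** If `θ : G → H` is a fibration (star-surjective) and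
`A = ker θ`, the induced functor `ψ : G ⫽ A → H`, `[g] ↦ gθ`, is a covering: for
every identity `e` of `G` and every `h ∈ H` with `h𝐝 = eθ` there is `g` with
`gg⁻¹ = e` and `gθ = h`, and any `g'` with `g'g'⁻¹ ≃_A e` and `g'θ = h` satisfies
`g' ≃_A g`. -/
theorem induced_functor_is_covering {G : Type u} {H : Type v}
    [OGroupoid G] [OGroupoid H] (θ : OFunctor G H) (hθ : θ.StarSurjective) :
    ∀ e : G, IsId e → ∀ h : H, dm h = θ.toFun e →
      ∃ g : G, dm g = e ∧ θ.toFun g = h ∧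
        ∀ g' : G, simA θ.ker (dm g') e → θ.toFun g' = h → simA θ.ker g' g := by
  intro e he h hh
  obtain ⟨g, hgdm, hgθ⟩ := hθ e he h hh
  refine ⟨g, hgdm, hgθ, ?_⟩
  intro g' hsim hg'θ
  obtain ⟨⟨a, haA, b, hbA, hCaf, hCfb, hab⟩, ⟨c, hcA, d, hdA, hCce, hCed, hcd⟩⟩ := hsim
  have hIdf : IsId (dm g') := isId_dm g'
  constructor
  · -- a * g' * q ≤ g
    -- massage: rn a = dm g', a * dm g' = a, dm a ≤ e
    have hra : rn a = dm g' := by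
      have : a⁻¹ * a = dm g' * (dm g')⁻¹ := hCaf
      rwa [hIdf] at this
    have haf : a * dm g' = a := by
      show a * dm g' = a
      rw [← hra]; exact mul_rn_self a
    have hdb : dm b = dm g' := by
      have h1 : rn (dm g') = dm b := hCfb
      rw [id_rn hIdf] at h1
      exact h1.symm
    have hCab : Cmp a b := by show rn a = dm b; rw [hra, hdb]
    have hab' : a * b ≤ e := by rwa [haf] at hab
    have hda : dm a ≤ dm g := by
      have h1 := le_dm hab'
      rw [dm_mul hCab, show dm e = e from he, ← hgdm] at h1
      exact h1
    have hCag' : Cmp a g' := by show rn a = dm g'; exact hra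
    obtain ⟨q, hqA, hCq, hle⟩ := key θ haA hCag' hda (hgθ.trans hg'θ.symm)
    exact ⟨a, haA, q, hqA, hCag', hCq, hle⟩
  · -- c * g * s ≤ g'
    have hrc : rn c = e := by
      have : c⁻¹ * c = e * e⁻¹ := hCce
      rwa [he] at this
    have hce : c * e = c := by
      rw [← hrc]; exact mul_rn_self c
    have hdd : dm d = e := by
      have h1 : rn e = dm d := hCed
      rw [id_rn he] at h1
      exact h1.symm
    have hCcd : Cmp c d := by show rn c = dm d; rw [hrc, hdd]
    have hcd' : c * d ≤ dm g' := by rwa [hce] at hcd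
    have hdc : dm c ≤ dm g' := by
      have h1 := le_dm hcd'
      rwa [dm_mul hCcd, show dm (dm g') = dm g' from isId_dm g'] at h1
    have hCcg : Cmp c g := by show rn c = dm g; rw [hrc, hgdm]
    obtain ⟨s, hsA, hCs, hle⟩ := key θ hcA hCcg hdc (hg'θ.trans hgθ.symm)
    exact ⟨c, hcA, s, hsA, hCcg, hCs, hle⟩
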